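/- For a > 0, the function ω_a(ξ) = (1 − τ_a(ξ))/ξ, where τ_a is the trapezoid function with parameters a, 2a, satisfies ‖ω_a‖₂² = (4 − 4 ln 2)/a and ‖ω_a'‖₂² = 2/(3a³) (derivative almost everywhere). -/

import Mathlib

/-!
`ω_a` is odd, vanishes on `[-a, a]`, equals `1/a - 1/ξ` on `[a, 2a]` and `1/ξ` beyond `2a`, so
`‖ω_a‖₂²` is twice a sum of elementary integrals over `(0, ∞)`. Off the null set `|ξ| ∈ {a, 2a}`,
`ω_a` agrees near `ξ` with one of these formulas, so any a.e. derivative equals a.e. the piecewise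
derivative, whose square is `ξ⁻⁴` for `|ξ| ≥ a` and `0` otherwise.
-/

open MeasureTheory

/-- The trapezoid function `τ_a`. -/
noncomputable def trap (a ξ : ℝ) : ℝ :=
  if |ξ| ≤ a then 1 else if |ξ| < 2 * a then (2 * a - |ξ|) / a else 0

/-- `ω_a(ξ) = (1 - τ_a(ξ))/ξ`. -/
noncomputable def oma (a ξ : ℝ) : ℝ := (1 - trap a ξ) / ξ

open Set Filter Topology

theorem Function.Odd.hasDerivAt_neg {𝕜 F : Type*} [NontriviallyNormedField 𝕜]
    [NormedAddCommGroup F] [NormedSpace 𝕜 F] {f : 𝕜 → F} {f' : F} {x : 𝕜}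
    (hf : f.Odd) (h : HasDerivAt f f' x) : HasDerivAt f f' (-x) := by
  have hcomp : HasDerivAt (fun y => -f (-y)) (-((-1 : 𝕜) • f')) (-x) :=
    (h.scomp_of_eq (-x) (_root_.hasDerivAt_neg (-x)) (neg_neg x).symm).neg
  have hfun : (fun y => -f (-y)) = f := funext fun y => by rw [hf, neg_neg]
  simpa [hfun] using hcomp

theorem integrableOn_Ioi_inv_pow {n : ℕ} (hn : 2 ≤ n) {c : ℝ} (hc : 0 < c) :
    IntegrableOn (fun x : ℝ => (x ^ n)⁻¹) (Ioi c) := by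
  refine (integrableOn_Ioi_rpow_of_lt (a := -(n : ℝ)) (by norm_cast; omega) hc).congr_fun
    (fun x hx => ?_) measurableSet_Ioi
  simp [Real.rpow_neg (hc.trans hx).le]

theorem integral_Ioi_inv_pow {n : ℕ} (hn : 2 ≤ n) {c : ℝ} (hc : 0 < c) :
    ∫ x in Ioi c, (x ^ n)⁻¹ = (((n : ℝ) - 1) * c ^ (n - 1))⁻¹ := by
  have hrpow : ∀ x ∈ Ioi c, (x ^ n)⁻¹ = x ^ (-(n : ℝ)) := fun x hx => by
    simp [Real.rpow_neg (hc.trans hx).le]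
  rw [setIntegral_congr_fun measurableSet_Ioi hrpow,
    integral_Ioi_rpow_of_lt (by norm_cast; omega) hc,
    show -(n : ℝ) + 1 = -((n - 1 : ℕ) : ℝ) by push_cast [show 1 ≤ n by omega]; ring,
    Real.rpow_neg hc.le, Real.rpow_natCast]
  push_cast [show 1 ≤ n by omega]
  field_simp

theorem ae_abs_ne (c : ℝ) : ∀ᵐ x ∂(volume : Measure ℝ), |x| ≠ c := by
  filter_upwards [volume.ae_ne c, volume.ae_ne (-c)] with x h₁ h₂ h
  rcases abs_choice x with hx | hx <;> [exact h₁ (hx ▸ h); exact h₂ (by linarith)]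

theorem oma_odd (a : ℝ) : (oma a).Odd := fun x => by
  simp only [oma, trap, abs_neg]
  ring

theorem sq_oma_abs (a x : ℝ) : oma a |x| ^ 2 = oma a x ^ 2 := by
  rcases abs_choice x with h | h <;> simp [h, oma_odd a x]

theorem oma_of_abs_le {a x : ℝ} (h : |x| ≤ a) : oma a x = 0 := by
  simp [oma, trap, h]

theorem oma_of_mem_Icc {a x : ℝ} (ha : 0 < a) (h : x ∈ Icc a (2 * a)) :
    oma a x = a⁻¹ - x⁻¹ := by
  obtain ⟨h₁, h₂⟩ := h
  have hx : 0 < x := ha.trans_le h₁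
  simp only [oma, trap, abs_of_pos hx]
  split_ifs with hxa hx2
  · rw [le_antisymm hxa h₁]; ring
  · field_simp; ring
  · rw [le_antisymm h₂ (not_lt.1 hx2)]; field_simp; ring

theorem oma_of_two_mul_le_abs {a x : ℝ} (ha : 0 < a) (h : 2 * a ≤ |x|) : oma a x = x⁻¹ := by
  simp [oma, trap, show ¬ |x| ≤ a by linarith, not_lt.2 h]

/-- `ω_a'` away from the kinks `|ξ| = a`, `|ξ| = 2a`, where `ω_a` is not differentiable. -/
noncomputable def omaDeriv (a x : ℝ) : ℝ :=
  if |x| < a then 0 else if |x| < 2 * a then (x ^ 2)⁻¹ else -(x ^ 2)⁻¹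

theorem omaDeriv_neg (a x : ℝ) : omaDeriv a (-x) = omaDeriv a x := by
  simp [omaDeriv]

theorem hasDerivAt_oma {a x : ℝ} (ha : 0 < a) (h₁ : |x| ≠ a) (h₂ : |x| ≠ 2 * a) :
    HasDerivAt (oma a) (omaDeriv a x) x := by
  wlog hx : 0 ≤ x generalizing x
  · have h := (oma_odd a).hasDerivAt_neg (this (by rwa [abs_neg]) (by rwa [abs_neg]) (by linarith))
    rwa [neg_neg, omaDeriv_neg] at h
  rw [abs_of_nonneg hx] at h₁ h₂
  rcases h₁.lt_or_gt with hxa | hxa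
  · have hloc : oma a =ᶠ[𝓝 x] fun _ => 0 :=
      eventually_of_mem (Ioo_mem_nhds (by linarith) hxa) fun y hy =>
        oma_of_abs_le (abs_le.2 ⟨hy.1.le, hy.2.le⟩)
    rw [omaDeriv, if_pos (by rwa [abs_of_nonneg hx])]
    exact (hasDerivAt_const x 0).congr_of_eventuallyEq hloc
  have hx0 : x ≠ 0 := (ha.trans hxa).ne'
  rcases h₂.lt_or_gt with hx2 | hx2
  · have hloc : oma a =ᶠ[𝓝 x] fun y => a⁻¹ - y⁻¹ :=
      eventually_of_mem (Ioo_mem_nhds hxa hx2) fun y hy => oma_of_mem_Icc ha ⟨hy.1.le, hy.2.le⟩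
    rw [omaDeriv, abs_of_nonneg hx, if_neg hxa.not_gt, if_pos hx2]
    simpa using ((hasDerivAt_inv hx0).const_sub a⁻¹).congr_of_eventuallyEq hloc
  · have hloc : oma a =ᶠ[𝓝 x] fun y => y⁻¹ :=
      eventually_of_mem (Ioi_mem_nhds hx2) fun y hy =>
        oma_of_two_mul_le_abs ha (hy.out.le.trans (le_abs_self y))
    rw [omaDeriv, abs_of_nonneg hx, if_neg hxa.not_gt, if_neg hx2.not_gt]
    exact (hasDerivAt_inv hx0).congr_of_eventuallyEq hloc

theorem omaDeriv_sq (a x : ℝ) :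
    omaDeriv a x ^ 2 = (Ici a).indicator (fun t => (t ^ 4)⁻¹) |x| := by
  have hpow : ((x ^ 2)⁻¹) ^ 2 = (|x| ^ 4)⁻¹ := by
    rw [← sq_abs x]; ring
  unfold omaDeriv
  split_ifs with h₁
  · simp [indicator, not_le.2 h₁]
  all_goals simp [indicator, not_lt.1 h₁, hpow]

theorem intervalIntegrable_sq_sub_inv {a b : ℝ} (c : ℝ) (ha : 0 < a) (hb : 0 < b) :
    IntervalIntegrable (fun x : ℝ => (c - x⁻¹) ^ 2) volume a b :=
  ((continuousOn_const.sub (continuousOn_inv₀.mono fun _ hx =>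
    (lt_min ha hb |>.trans_le hx.1).ne')).pow 2).intervalIntegrable

theorem integral_sq_inv_sub_inv {a : ℝ} (ha : 0 < a) :
    ∫ x in a..2 * a, (a⁻¹ - x⁻¹) ^ 2 = (3 / 2 - 2 * Real.log 2) / a := by
  have hderiv : ∀ x ∈ uIcc a (2 * a),
      HasDerivAt (fun x => x / a ^ 2 - 2 / a * Real.log x - x⁻¹) ((a⁻¹ - x⁻¹) ^ 2) x := by
    intro x hx
    have hx0 : x ≠ 0 := (ha.trans_le (uIcc_of_le (by linarith : a ≤ 2 * a) ▸ hx).1).ne'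
    refine ((((hasDerivAt_id x).div_const (a ^ 2)).sub
      ((Real.hasDerivAt_log hx0).const_mul (2 / a))).sub (hasDerivAt_inv hx0)).congr_deriv ?_
    field_simp
    ring
  rw [intervalIntegral.integral_eq_sub_of_hasDerivAt hderiv
      (intervalIntegrable_sq_sub_inv _ ha (by linarith)),
    Real.log_mul two_ne_zero ha.ne']
  field_simp
  ring

theorem integral_sq_oma {a : ℝ} (ha : 0 < a) :
    ∫ x, oma a x ^ 2 = (4 - 4 * Real.log 2) / a := by
  have h2a : a ≤ 2 * a := by linarith
  have hzero : EqOn (fun x => oma a x ^ 2) 0 (uIcc 0 a) := fun x hx => by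
    rw [uIcc_of_le ha.le] at hx
    simp [oma_of_abs_le (abs_le.2 ⟨by linarith [hx.1], hx.2⟩)]
  have hmid : EqOn (fun x => oma a x ^ 2) (fun x => (a⁻¹ - x⁻¹) ^ 2) (uIcc a (2 * a)) :=
    fun x hx => by simp [oma_of_mem_Icc ha (uIcc_of_le h2a ▸ hx)]
  have htail : EqOn (fun x => oma a x ^ 2) (fun x => (x ^ 2)⁻¹) (Ioi (2 * a)) := fun x hx => by
    simp [oma_of_two_mul_le_abs ha (hx.out.le.trans (le_abs_self x))]
  have hint_zero : IntervalIntegrable (fun x => oma a x ^ 2) volume 0 a :=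
    (intervalIntegrable_congr (hzero.mono uIoc_subset_uIcc)).2 intervalIntegrable_const
  have hint_mid : IntervalIntegrable (fun x => oma a x ^ 2) volume a (2 * a) :=
    (intervalIntegrable_congr (hmid.mono uIoc_subset_uIcc)).2
      (intervalIntegrable_sq_sub_inv _ ha (by linarith))
  have hint_tail : IntegrableOn (fun x => oma a x ^ 2) (Ioi (2 * a)) :=
    (integrableOn_Ioi_inv_pow le_rfl (by linarith)).congr_fun htail.symm measurableSet_Ioi
  calc ∫ x, oma a x ^ 2
      = 2 * ∫ x in Ioi 0, oma a x ^ 2 := by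
        simp_rw [← integral_comp_abs, sq_oma_abs]
    _ = 2 * ((∫ x in 0..a, oma a x ^ 2) + (∫ x in a..2 * a, oma a x ^ 2)
          + ∫ x in Ioi (2 * a), oma a x ^ 2) := by
        rw [intervalIntegral.integral_add_adjacent_intervals hint_zero hint_mid,
          intervalIntegral.integral_interval_add_Ioi' (hint_zero.trans hint_mid) hint_tail]
    _ = (4 - 4 * Real.log 2) / a := by
        rw [intervalIntegral.integral_congr hzero, intervalIntegral.integral_congr hmid,
          setIntegral_congr_fun measurableSet_Ioi htail, integral_sq_inv_sub_inv ha,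
          integral_Ioi_inv_pow le_rfl (by linarith)]
        simp only [Pi.zero_apply, intervalIntegral.integral_zero]
        field_simp
        ring

theorem integral_sq_omaDeriv {a : ℝ} (ha : 0 < a) :
    ∫ x, omaDeriv a x ^ 2 = 2 / (3 * a ^ 3) := by
  simp_rw [omaDeriv_sq, integral_comp_abs (f := (Ici a).indicator fun t => (t ^ 4)⁻¹),
    setIntegral_indicator measurableSet_Ici,
    inter_eq_right.2 (Ici_subset_Ioi.2 ha), integral_Ici_eq_integral_Ioi,
    integral_Ioi_inv_pow (by norm_num : 2 ≤ 4) ha]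
  field_simp
  norm_num

/-- `‖ω_a‖₂² = (4 - 4 ln 2)/a` and `‖ω_a'‖₂² = 2/(3a³)` for any a.e. derivative of `ω_a`. -/
theorem stmt5 (a : ℝ) (ha : 0 < a) (g : ℝ → ℝ)
    (hg : ∀ᵐ ξ ∂(volume : Measure ℝ), HasDerivAt (oma a) (g ξ) ξ) :
    (∫ ξ : ℝ, (oma a ξ) ^ 2) = (4 - 4 * Real.log 2) / a ∧
      (∫ ξ : ℝ, (g ξ) ^ 2) = 2 / (3 * a ^ 3) := by
  refine ⟨integral_sq_oma ha, ?_⟩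
  have hg_eq : (fun ξ => g ξ ^ 2) =ᵐ[volume] fun ξ => omaDeriv a ξ ^ 2 := by
    filter_upwards [hg, ae_abs_ne a, ae_abs_ne (2 * a)] with ξ hξ h₁ h₂
    rw [hξ.unique (hasDerivAt_oma ha h₁ h₂)]
  rw [integral_congr_ae hg_eq, integral_sq_omaDeriv ha]
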